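/- Quadrilateral–quadrilateral C¹ condition (one side): Let f(u,v) = Σ_{i,j=0}^p b_{ij}B_i^p(u)B_j^p(v), let α(v) = (1-v)α₀ + vα₁ and β(v) = (1-v)β₀ + vβ₁ be affine functions, and suppose b_{0,j} = c_j for j = 0,...,p. Then the identity ∂ᵤf(0,v) − β(v)∂ᵥf(0,v) = α(v)·Σ_{j=0}^{p-1}d_j B_j^{p-1}(v) holds for all v if and only if b_{1,j} = c_j + (1/p)·((1/p)((p-j)α₀d_j + jα₁d_{j-1}) + (p-j)β₀(c_{j+1}−c_j) + jβ₁(c_j−c_{j-1})) for j = 0,...,p, with conventions c_{-1} = c_{p+1} = 0 and d_{-1} = d_p = 0. -/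

import Mathlib

open Finset

noncomputable section

/-- Univariate Bernstein polynomial `B_j^q(v) = C(q,j) v^j (1-v)^(q-j)`. -/
def bern (q j : ℕ) (v : ℝ) : ℝ := (q.choose j : ℝ) * v ^ j * (1 - v) ^ (q - j)

/-- Polynomial of bi-degree `(p,p)` in the tensor-product Bernstein basis. -/
def tpPoly (p : ℕ) (b : ℕ → ℕ → ℝ) (u v : ℝ) : ℝ :=
  ∑ i ∈ range (p + 1), ∑ j ∈ range (p + 1), b i j * bern p i u * bern p j v

def Dbern (q j : ℕ) (v : ℝ) : ℝ :=
  (q.choose j : ℝ) * ((j:ℝ) * v^(j-1)) * (1-v)^(q-j)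
    - (q.choose j : ℝ) * v^j * (((q-j : ℕ):ℝ) * (1-v)^(q-j-1))
lemma hasDerivAt_bern (q j : ℕ) (v : ℝ) : HasDerivAt (bern q j) (Dbern q j v) v := by
  have h1 : HasDerivAt (fun v : ℝ => v ^ j) ((j:ℝ) * v^(j-1)) v := hasDerivAt_pow j v
  have h2 : HasDerivAt (fun v : ℝ => (1 - v)^(q-j))
      (((q-j:ℕ):ℝ) * (1-v)^(q-j-1) * (-1)) v := by
    have := (hasDerivAt_pow (q-j) (1-v)).comp v (((hasDerivAt_id v).const_sub (1:ℝ)))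
    simpa [Function.comp_def] using this
  have h3 := (h1.const_mul ((q.choose j : ℝ))).mul h2
  have heq : Dbern q j v = (q.choose j:ℝ) * ((j:ℝ)*v^(j-1)) * (1-v)^(q-j)
      + ((q.choose j:ℝ) * v^j) * (((q-j:ℕ):ℝ) * (1-v)^(q-j-1) * (-1)) := by
    unfold Dbern; ring
  rw [heq]; exact h3

lemma Dbern_zero_zero (p : ℕ) : Dbern p 0 0 = -(p:ℝ) := by
  simp [Dbern]

lemma Dbern_one_zero (p : ℕ) (hp : 1 ≤ p) : Dbern p 1 0 = (p:ℝ) := by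
  simp [Dbern, Nat.choose_one_right]

lemma Dbern_ge_two_zero (p i : ℕ) (hi : 2 ≤ i) : Dbern p i 0 = 0 := by
  have h1 : (0:ℝ)^(i-1) = 0 := by
    apply zero_pow; omega
  have h2 : (0:ℝ)^i = 0 := by apply zero_pow; omega
  simp [Dbern, h1, h2]

lemma bern_zero (p i : ℕ) : bern p i 0 = if i = 0 then 1 else 0 := by
  rcases Nat.eq_zero_or_pos i with h | h
  · simp [h, bern]
  · simp [bern, Nat.pos_iff_ne_zero.mp h, zero_pow (Nat.pos_iff_ne_zero.mp h)]


lemma deriv_u (p : ℕ) (hp : 1 ≤ p) (b : ℕ → ℕ → ℝ) (v : ℝ) :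
    deriv (fun u => tpPoly p b u v) 0
      = ∑ j ∈ range (p+1), (p:ℝ) * (b 1 j - b 0 j) * bern p j v := by
  have hA : HasDerivAt (fun u => tpPoly p b u v)
      (∑ i ∈ range (p+1), ∑ j ∈ range (p+1), b i j * Dbern p i 0 * bern p j v) 0 := by
    apply HasDerivAt.fun_sum
    intro i _
    apply HasDerivAt.fun_sum
    intro j _
    exact ((hasDerivAt_bern p i 0).const_mul (b i j)).mul_const (bern p j v)
  rw [hA.deriv]
  have hsub : ∑ i ∈ range (p+1), ∑ j ∈ range (p+1), b i j * Dbern p i 0 * bern p j v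
      = ∑ i ∈ range 2, ∑ j ∈ range (p+1), b i j * Dbern p i 0 * bern p j v := by
    symm
    apply Finset.sum_subset
    · intro x hx; simp at hx ⊢; omega
    · intro i _ hi
      simp only [mem_range, not_lt] at hi
      apply Finset.sum_eq_zero
      intro j _
      rw [Dbern_ge_two_zero p i hi]; ring
  rw [hsub]
  rw [Finset.sum_range_succ, Finset.sum_range_one, ← Finset.sum_add_distrib]
  apply Finset.sum_congr rfl
  intro j _
  rw [Dbern_zero_zero, Dbern_one_zero p hp]; ring

lemma tp_zero (p : ℕ) (b : ℕ → ℕ → ℝ) (w : ℝ) :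
    tpPoly p b 0 w = ∑ j ∈ range (p+1), b 0 j * bern p j w := by
  unfold tpPoly
  rw [Finset.sum_eq_single 0]
  · apply Finset.sum_congr rfl; intro j _; rw [bern_zero]; simp
  · intro i _ hi
    apply Finset.sum_eq_zero; intro j _
    rw [bern_zero]; simp [hi]
  · intro h; simp at h

lemma deriv_v (p : ℕ) (b : ℕ → ℕ → ℝ) (v : ℝ) :
    deriv (fun w => tpPoly p b 0 w) v = ∑ j ∈ range (p+1), b 0 j * Dbern p j v := by
  have hA : HasDerivAt (fun w => ∑ j ∈ range (p+1), b 0 j * bern p j w)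
      (∑ j ∈ range (p+1), b 0 j * Dbern p j v) v := by
    apply HasDerivAt.fun_sum
    intro j _
    exact (hasDerivAt_bern p j v).const_mul (b 0 j)
  have : (fun w => tpPoly p b 0 w) = fun w => ∑ j ∈ range (p+1), b 0 j * bern p j w := by
    funext w; exact tp_zero p b w
  rw [this, hA.deriv]

lemma nat1 (p j : ℕ) (hp : 1 ≤ p) : (j+1) * (p.choose (j+1)) = p * ((p-1).choose j) := by
  have h := Nat.add_one_mul_choose_eq (p-1) j
  simp only [Nat.succ_eq_add_one, Nat.sub_add_cancel hp] at h
  rw [mul_comm (j+1)]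
  exact h.symm
lemma nat2 (p j : ℕ) (hj : j < p) : (p - j) * (p.choose j) = p * ((p-1).choose j) := by
  have h1 := Nat.choose_succ_right_eq p j
  have h2 := nat1 p j (by omega)
  rw [mul_comm (p-j), ← h1, mul_comm _ (j+1)]
  exact h2
lemma cast1 (p j : ℕ) (hp : 1 ≤ p) :
    ((j:ℝ)+1) * (p.choose (j+1) : ℝ) = (p:ℝ) * (((p-1).choose j : ℕ) : ℝ) := by
  exact_mod_cast congrArg (Nat.cast : ℕ → ℝ) (nat1 p j hp)
lemma cast2 (p j : ℕ) (hj : j < p) :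
    (((p-j:ℕ)):ℝ) * (p.choose j : ℝ) = (p:ℝ) * (((p-1).choose j : ℕ) : ℝ) := by
  exact_mod_cast congrArg (Nat.cast : ℕ → ℝ) (nat2 p j hj)

lemma EL1 (p j : ℕ) (hj : j < p) (v : ℝ) :
    (p:ℝ) * ((1-v) * bern (p-1) j v) = ((p-j:ℕ):ℝ) * bern p j v := by
  unfold bern
  rw [show (1-v)^(p-j) = (1-v)^(p-1-j) * (1-v) from by
    rw [← pow_succ]; congr 1; omega]
  linear_combination ((1-v) * v^j * (1-v)^(p-1-j)) * (cast2 p j hj).symm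

lemma EL2 (p j : ℕ) (hp : 1 ≤ p) (v : ℝ) :
    (p:ℝ) * (v * bern (p-1) j v) = ((j:ℝ)+1) * bern p (j+1) v := by
  unfold bern
  have e1 : p - (j+1) = p - 1 - j := by omega
  rw [e1, pow_succ]
  linear_combination (v^j * v * (1-v)^(p-1-j)) * (cast1 p j hp).symm

lemma DSI (p : ℕ) (hp : 1 ≤ p) (c : ℕ → ℝ) (v : ℝ) :
    ∑ j ∈ range (p+1), c j * Dbern p j v
      = ∑ j ∈ range p, (p:ℝ) * (c (j+1) - c j) * bern (p-1) j v := by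
  have hsplit : ∀ j, c j * Dbern p j v
      = c j * ((p.choose j : ℝ) * ((j:ℝ) * v^(j-1)) * (1-v)^(p-j))
        - c j * ((p.choose j : ℝ) * v^j * (((p-j : ℕ):ℝ) * (1-v)^(p-j-1))) := by
    intro j; unfold Dbern; ring
  simp only [hsplit]
  rw [Finset.sum_sub_distrib]
  have hA : ∑ j ∈ range (p+1), c j * ((p.choose j : ℝ) * ((j:ℝ) * v^(j-1)) * (1-v)^(p-j))
      = ∑ j ∈ range p, c (j+1) * ((p:ℝ) * bern (p-1) j v) := by
    rw [Finset.sum_range_succ']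
    simp only [Nat.cast_zero]
    rw [show c 0 * ((p.choose 0 : ℝ) * ((0:ℝ) * v^(0-1)) * (1-v)^(p-0)) = 0 by ring,
      add_zero]
    apply Finset.sum_congr rfl
    intro j hj
    have e1 : p - (j+1) = p - 1 - j := by omega
    have e2 : (j+1) - 1 = j := by omega
    rw [e1, e2]
    unfold bern
    push_cast
    linear_combination (c (j+1) * v^j * (1-v)^(p-1-j)) * (cast1 p j hp)
  have hB : ∑ j ∈ range (p+1), c j * ((p.choose j : ℝ) * v^j * (((p-j : ℕ):ℝ) * (1-v)^(p-j-1)))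
      = ∑ j ∈ range p, c j * ((p:ℝ) * bern (p-1) j v) := by
    rw [Finset.sum_range_succ]
    rw [show c p * ((p.choose p : ℝ) * v^p * (((p-p : ℕ):ℝ) * (1-v)^(p-p-1))) = 0 by
      simp]
    rw [add_zero]
    apply Finset.sum_congr rfl
    intro j hj
    simp only [mem_range] at hj
    have e1 : p - j - 1 = p - 1 - j := by omega
    rw [e1]
    unfold bern
    linear_combination (c j * v^j * (1-v)^(p-1-j)) * (cast2 p j hj)
  rw [hA, hB, ← Finset.sum_sub_distrib]
  apply Finset.sum_congr rfl
  intro j _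
  ring

lemma bern_li (p : ℕ) (e : ℕ → ℝ)
    (h : ∀ v : ℝ, ∑ j ∈ range (p+1), e j * bern p j v = 0) :
    ∀ j ≤ p, e j = 0 := by
  set P : Polynomial ℝ :=
    ∑ j ∈ range (p+1), Polynomial.C (e j * (p.choose j : ℝ)) * Polynomial.X ^ j with hP
  have hPz : P = 0 := by
    apply Polynomial.eq_zero_of_infinite_isRoot
    apply Set.Infinite.mono (s := Set.Ioi (0:ℝ))
    swap
    · exact Set.Ioi_infinite 0
    intro t ht
    simp only [Set.mem_Ioi] at ht
    have h1t : (1:ℝ) + t ≠ 0 := by positivity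
    simp only [Set.mem_setOf_eq, Polynomial.IsRoot, hP, Polynomial.eval_finset_sum,
      Polynomial.eval_mul, Polynomial.eval_C, Polynomial.eval_pow, Polynomial.eval_X]
    have key : ∀ j ∈ range (p+1),
        e j * (p.choose j : ℝ) * t ^ j
          = (1+t)^p * (e j * bern p j (t/(1+t))) := by
      intro j hj
      simp only [mem_range] at hj
      unfold bern
      have h2 : (1:ℝ) - t/(1+t) = 1/(1+t) := by field_simp; ring
      rw [h2, div_pow, div_pow, one_pow]
      have e1 : p = j + (p - j) := by omega
      rw [show (1+t)^p = (1+t)^j * (1+t)^(p-j) from by rw [← pow_add, Nat.add_sub_cancel' (by omega : j ≤ p)]]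
      field_simp
    rw [Finset.sum_congr rfl key, ← Finset.mul_sum, h (t/(1+t)), mul_zero]
  intro j hj
  have hc : P.coeff j = e j * (p.choose j : ℝ) := by
    rw [hP, Polynomial.finset_sum_coeff]
    rw [Finset.sum_eq_single j]
    · rw [Polynomial.coeff_C_mul, Polynomial.coeff_X_pow]; simp
    · intro i _ hij
      rw [Polynomial.coeff_C_mul, Polynomial.coeff_X_pow]
      simp only [hij, if_neg (Ne.symm hij), mul_zero]
    · intro hh; simp at hh; omega
  rw [hPz] at hc
  simp only [Polynomial.coeff_zero] at hc
  have hch : (0:ℝ) < (p.choose j : ℝ) := by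
    exact_mod_cast Nat.choose_pos hj
  have := hc.symm
  rcases mul_eq_zero.mp this with h0 | h0
  · exact h0
  · exact absurd h0 (ne_of_gt hch)

lemma I1 (p : ℕ) (hp : 1 ≤ p) (β₀ β₁ : ℝ) (c : ℕ → ℝ) (v : ℝ) :
    ((1-v)*β₀ + v*β₁) * ∑ j ∈ range (p+1), c j * Dbern p j v
    = ∑ j ∈ range (p+1),
        (((p:ℝ)-(j:ℝ))*β₀*(c (j+1) - c j) + (j:ℝ)*β₁*(c j - c (j-1))) * bern p j v := by
  rw [DSI p hp c v, Finset.mul_sum]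
  have step : ∀ j ∈ range p, ((1-v)*β₀ + v*β₁) * ((p:ℝ)*(c (j+1) - c j) * bern (p-1) j v)
      = (c (j+1) - c j) * β₀ * (((p-j:ℕ):ℝ) * bern p j v)
        + (c (j+1) - c j) * β₁ * (((j:ℝ)+1) * bern p (j+1) v) := by
    intro j hj; simp only [mem_range] at hj
    rw [← EL1 p j hj v, ← EL2 p j hp v]; ring
  rw [Finset.sum_congr rfl step, Finset.sum_add_distrib]
  have part1 : ∑ j ∈ range p, (c (j+1) - c j) * β₀ * (((p-j:ℕ):ℝ) * bern p j v)
      = ∑ j ∈ range (p+1), ((p:ℝ)-(j:ℝ))*β₀*(c (j+1) - c j) * bern p j v := by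
    rw [Finset.sum_range_succ, show ((p:ℝ)-(p:ℝ))*β₀*(c (p+1) - c p) * bern p p v = 0 by ring,
      add_zero]
    apply Finset.sum_congr rfl
    intro j hj; simp only [mem_range] at hj
    rw [Nat.cast_sub (le_of_lt hj)]; ring
  have part2 : ∑ j ∈ range p, (c (j+1) - c j) * β₁ * (((j:ℝ)+1) * bern p (j+1) v)
      = ∑ j ∈ range (p+1), (j:ℝ)*β₁*(c j - c (j-1)) * bern p j v := by
    rw [Finset.sum_range_succ', show ((0:ℕ):ℝ)*β₁*(c 0 - c (0-1)) * bern p 0 v = 0 by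
      simp, add_zero]
    apply Finset.sum_congr rfl
    intro j hj
    simp only [Nat.add_sub_cancel]
    push_cast
    ring
  rw [part1, part2, ← Finset.sum_add_distrib]
  apply Finset.sum_congr rfl
  intro j _; ring

lemma I2 (p : ℕ) (hp : 1 ≤ p) (α₀ α₁ : ℝ) (d : ℕ → ℝ) (v : ℝ) :
    ((1-v)*α₀ + v*α₁) * ∑ j ∈ range p, d j * bern (p-1) j v
    = ∑ j ∈ range (p+1),
        (1/(p:ℝ)) * (((p:ℝ)-(j:ℝ))*α₀*(d j) + (j:ℝ)*α₁*(d (j-1))) * bern p j v := by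
  have hp0 : (p:ℝ) ≠ 0 := Nat.cast_ne_zero.mpr (by omega)
  apply mul_left_cancel₀ hp0
  rw [Finset.mul_sum, Finset.mul_sum, Finset.mul_sum]
  have step : ∀ j ∈ range p, (p:ℝ) * (((1-v)*α₀ + v*α₁) * (d j * bern (p-1) j v))
      = d j * α₀ * (((p-j:ℕ):ℝ) * bern p j v)
        + d j * α₁ * (((j:ℝ)+1) * bern p (j+1) v) := by
    intro j hj; simp only [mem_range] at hj
    rw [← EL1 p j hj v, ← EL2 p j hp v]; ring
  rw [Finset.sum_congr rfl step, Finset.sum_add_distrib]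
  have part1 : ∑ j ∈ range p, d j * α₀ * (((p-j:ℕ):ℝ) * bern p j v)
      = ∑ j ∈ range (p+1), ((p:ℝ)-(j:ℝ))*α₀*(d j) * bern p j v := by
    rw [Finset.sum_range_succ, show ((p:ℝ)-(p:ℝ))*α₀*(d p) * bern p p v = 0 by ring,
      add_zero]
    apply Finset.sum_congr rfl
    intro j hj; simp only [mem_range] at hj
    rw [Nat.cast_sub (le_of_lt hj)]; ring
  have part2 : ∑ j ∈ range p, d j * α₁ * (((j:ℝ)+1) * bern p (j+1) v)
      = ∑ j ∈ range (p+1), (j:ℝ)*α₁*(d (j-1)) * bern p j v := by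
    rw [Finset.sum_range_succ', show ((0:ℕ):ℝ)*α₁*(d (0-1)) * bern p 0 v = 0 by simp,
      add_zero]
    apply Finset.sum_congr rfl
    intro j hj
    simp only [Nat.add_sub_cancel]
    push_cast
    ring
  rw [part1, part2, ← Finset.sum_add_distrib]
  apply Finset.sum_congr rfl
  intro j _
  field_simp

def Ecoef (p : ℕ) (b : ℕ → ℕ → ℝ) (α₀ α₁ β₀ β₁ : ℝ) (c d : ℕ → ℝ) (j : ℕ) : ℝ :=
  (p:ℝ) * (b 1 j - c j)
  - (((p:ℝ)-(j:ℝ)) * β₀ * (c (j+1) - c j) + (j:ℝ) * β₁ * (c j - c (j-1)))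
  - (1/(p:ℝ)) * (((p:ℝ)-(j:ℝ)) * α₀ * (d j) + (j:ℝ) * α₁ * (d (j-1)))

lemma chain (p : ℕ) (hp : 1 ≤ p) (b : ℕ → ℕ → ℝ) (α₀ α₁ β₀ β₁ : ℝ) (c d : ℕ → ℝ)
    (hb0 : ∀ j ≤ p, b 0 j = c j) (v : ℝ) :
    deriv (fun u => tpPoly p b u v) 0
      - ((1 - v) * β₀ + v * β₁) * deriv (fun w => tpPoly p b 0 w) v
      - ((1 - v) * α₀ + v * α₁) * ∑ j ∈ range p, d j * bern (p - 1) j v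
    = ∑ j ∈ range (p+1), Ecoef p b α₀ α₁ β₀ β₁ c d j * bern p j v := by
  rw [deriv_u p hp b v, deriv_v p b v]
  have hc : ∀ j ∈ range (p+1), b 0 j * Dbern p j v = c j * Dbern p j v := by
    intro j hj; simp only [mem_range] at hj
    rw [hb0 j (by omega)]
  have hc2 : ∀ j ∈ range (p+1), (p:ℝ) * (b 1 j - b 0 j) * bern p j v
      = (p:ℝ) * (b 1 j - c j) * bern p j v := by
    intro j hj; simp only [mem_range] at hj
    rw [hb0 j (by omega)]
  rw [Finset.sum_congr rfl hc, Finset.sum_congr rfl hc2, I1 p hp β₀ β₁ c v,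
    I2 p hp α₀ α₁ d v, ← Finset.sum_sub_distrib, ← Finset.sum_sub_distrib]
  apply Finset.sum_congr rfl
  intro j _
  unfold Ecoef
  ring

theorem quad_quad_C1_condition (p : ℕ) (hp : 1 ≤ p) (b : ℕ → ℕ → ℝ)
    (α₀ α₁ β₀ β₁ : ℝ) (c d : ℕ → ℝ)
    (hb0 : ∀ j ≤ p, b 0 j = c j) :
    (∀ v : ℝ,
      deriv (fun u => tpPoly p b u v) 0 -
          ((1 - v) * β₀ + v * β₁) * deriv (fun w => tpPoly p b 0 w) v =
        ((1 - v) * α₀ + v * α₁) * ∑ j ∈ range p, d j * bern (p - 1) j v) ↔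
    (∀ j ≤ p,
      b 1 j = c j + (1 / (p : ℝ)) *
        ((1 / (p : ℝ)) * (((p : ℝ) - (j : ℝ)) * α₀ * d j + (j : ℝ) * α₁ * d (j - 1)) +
          ((p : ℝ) - (j : ℝ)) * β₀ * (c (j + 1) - c j) +
          (j : ℝ) * β₁ * (c j - c (j - 1)))) := by
  have hp0 : (p:ℝ) ≠ 0 := Nat.cast_ne_zero.mpr (by omega)
  constructor
  · intro h
    have hz : ∀ v : ℝ, ∑ j ∈ range (p+1), Ecoef p b α₀ α₁ β₀ β₁ c d j * bern p j v = 0 := by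
      intro v
      rw [← chain p hp b α₀ α₁ β₀ β₁ c d hb0 v, h v]
      ring
    have hE := bern_li p _ hz
    intro j hj
    have := hE j hj
    unfold Ecoef at this
    field_simp at this ⊢
    linarith
  · intro h v
    have hz : ∀ j ∈ range (p+1), Ecoef p b α₀ α₁ β₀ β₁ c d j * bern p j v = 0 := by
      intro j hj
      simp only [mem_range] at hj
      unfold Ecoef
      rw [h j (by omega)]
      field_simp
      ring
    have := chain p hp b α₀ α₁ β₀ β₁ c d hb0 v
    rw [Finset.sum_eq_zero hz] at this
    linarith
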